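/- arXiv:1904.05824 — 3 statements merged into one kernel-verified Lean document; each statement's English description precedes it below -/
import Mathlib

section
/- With the same construction: if z, z' ⊆ ℕ are infinite sets whose symmetric difference is finite, then the symmetric difference of z̃ and z̃' is finite. That is, the map z ↦ z̃ is equivariant with respect to the relation of eventual equality (E₀-invariant). -/
/-- The increasing enumeration of a set of naturals. -/
noncomputable def enum (A : Set ℕ) : ℕ → ℕ := Nat.nth (· ∈ A)

/-- The sparse set `z̃` built from a sequence `x` of sets and an infinite set `z`. -/
noncomputable def tilde (x : ℕ → Set ℕ) (z : Set ℕ) : Set ℕ :=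
  {m | ∃ n : ℕ, m = enum (x (enum z n)) (enum z (n + 1))}

open Classical in
lemma enum_shift (z z' : Set ℕ) (hz : z.Infinite) (hz' : z'.Infinite)
    (h : (symmDiff z z').Finite) :
    ∃ k k', ∀ i, enum z (k + i) = enum z' (k' + i) := by
  have hzs : {a | a ∈ z}.Infinite := hz
  have hz's : {a | a ∈ z'}.Infinite := hz'
  obtain ⟨b, hb⟩ := h.bddAbove
  set N := b + 1 with hN
  have hag : ∀ a, N ≤ a → (a ∈ z ↔ a ∈ z') := by
    intro a ha
    constructor <;> intro haz <;> by_contra hc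
    · have : a ∈ symmDiff z z' := Set.mem_symmDiff.mpr (Or.inl ⟨haz, hc⟩)
      have := hb this; omega
    · have : a ∈ symmDiff z z' := Set.mem_symmDiff.mpr (Or.inr ⟨haz, hc⟩)
      have := hb this; omega
  set k := Nat.count (· ∈ z) N with hk
  set k' := Nat.count (· ∈ z') N with hk'
  have key : ∀ j, Nat.count (· ∈ z') (N + j) + k = Nat.count (· ∈ z) (N + j) + k' := by
    intro j
    induction j with
    | zero => simp only [Nat.add_zero]; omega
    | succ j ih =>
      have h1 : Nat.count (· ∈ z) (N + j + 1) =
          Nat.count (· ∈ z) (N + j) + if (N + j) ∈ z then 1 else 0 := Nat.count_succ _ _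
      have h2 : Nat.count (· ∈ z') (N + j + 1) =
          Nat.count (· ∈ z') (N + j) + if (N + j) ∈ z' then 1 else 0 := Nat.count_succ _ _
      have h3 : (N + j ∈ z) ↔ (N + j ∈ z') := hag _ (by omega)
      by_cases hc : N + j ∈ z
      · rw [if_pos hc] at h1
        rw [if_pos (h3.mp hc)] at h2
        have : N + (j + 1) = N + j + 1 := by omega
        rw [this]; omega
      · rw [if_neg hc] at h1
        rw [if_neg (fun hh => hc (h3.mpr hh))] at h2
        have : N + (j + 1) = N + j + 1 := by omega
        rw [this]; omega
  refine ⟨k, k', fun i => ?_⟩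
  set a := Nat.nth (· ∈ z) (k + i) with ha
  have haz : a ∈ z := Nat.nth_mem_of_infinite hzs (k + i)
  have hca : Nat.count (· ∈ z) a = k + i := Nat.count_nth_of_infinite hzs (k + i)
  have hNa : N ≤ a := by
    by_contra hc
    push_neg at hc
    have h1 : Nat.count (· ∈ z) (a + 1) = Nat.count (· ∈ z) a + 1 := by
      rw [Nat.count_succ]; simp [haz]
    have h2 : Nat.count (· ∈ z) (a + 1) ≤ k := by
      rw [hk]; exact Nat.count_monotone _ (by omega)
    omega
  obtain ⟨j, hj⟩ := Nat.exists_eq_add_of_le hNa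
  have hkey := key j
  rw [← hj, hca] at hkey
  have hca' : Nat.count (· ∈ z') a = k' + i := by omega
  have haz' : a ∈ z' := (hag a hNa).mp haz
  have : Nat.nth (· ∈ z') (Nat.count (· ∈ z') a) = a := Nat.nth_count haz'
  rw [hca'] at this
  show Nat.nth (· ∈ z) (k + i) = Nat.nth (· ∈ z') (k' + i)
  rw [this]

theorem tilde_E0_invariant (x : ℕ → Set ℕ)
    (hdisj : ∀ m n, m ≠ n → Disjoint (x m) (x n))
    (hinf : ∀ n, (x n).Infinite)
    (z z' : Set ℕ) (hz : z.Infinite) (hz' : z'.Infinite)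
    (h : (symmDiff z z').Finite) :
    (symmDiff (tilde x z) (tilde x z')).Finite := by
  obtain ⟨k, k', hs⟩ := enum_shift z z' hz hz' h
  set f : Set ℕ → ℕ → ℕ := fun w n => enum (x (enum w n)) (enum w (n + 1)) with hf
  have hsub : symmDiff (tilde x z) (tilde x z') ⊆
      (f z '' Set.Iio k) ∪ (f z' '' Set.Iio k') := by
    intro m hm
    rw [Set.mem_symmDiff] at hm
    rcases hm with ⟨⟨n, hn⟩, hnot⟩ | ⟨⟨n, hn⟩, hnot⟩
    · rcases lt_or_ge n k with hlt | hge
      · exact Or.inl ⟨n, hlt, hn.symm⟩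
      · exfalso
        obtain ⟨i, rfl⟩ := Nat.exists_eq_add_of_le hge
        apply hnot
        refine ⟨k' + i, ?_⟩
        have e1 := hs i
        have e2 := hs (i + 1)
        rw [hn, ← e1, show k' + i + 1 = k' + (i + 1) by omega, ← e2,
          show k + (i + 1) = k + i + 1 by omega]
    · rcases lt_or_ge n k' with hlt | hge
      · exact Or.inr ⟨n, hlt, hn.symm⟩
      · exfalso
        obtain ⟨i, rfl⟩ := Nat.exists_eq_add_of_le hge
        apply hnot
        refine ⟨k + i, ?_⟩
        have e1 := hs i
        have e2 := hs (i + 1)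
        rw [hn, e1, show k + i + 1 = k + (i + 1) by omega, e2,
          show k' + (i + 1) = k' + i + 1 by omega]
  exact Set.Finite.subset (((Set.finite_Iio k).image _).union ((Set.finite_Iio k').image _)) hsub
end

section
/- Let (x_n) be a sequence of pairwise disjoint infinite subsets of ℕ and let y ⊆ ℕ be a set such that x_n ∩ y is finite for all n. Then for every infinite W ⊆ ℕ there exists an infinite z ⊆ W such that z̃ ∩ y = ∅, where z̃ = { x̂_{ẑ(n)}(ẑ(n+1)) : n ∈ ℕ }. -/
/-- `Nat.nth` of the range of a strictly monotone function is the function itself. -/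
lemma nth_range_of_strictMono (f : ℕ → ℕ) (hf : StrictMono f) :
    ∀ n, Nat.nth (· ∈ Set.range f) n = f n := by
  intro n
  induction n using Nat.strong_induction_on with
  | _ n ih =>
    rw [Nat.nth_eq_sInf]
    have hmem : f n ∈ {x | x ∈ Set.range f ∧ ∀ k < n, Nat.nth (· ∈ Set.range f) k < x} := by
      refine ⟨⟨n, rfl⟩, fun k hk => ?_⟩
      rw [ih k hk]
      exact hf hk
    refine le_antisymm (Nat.sInf_le hmem) ?_
    have hne : {x | x ∈ Set.range f ∧ ∀ k < n, Nat.nth (· ∈ Set.range f) k < x}.Nonempty :=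
      ⟨f n, hmem⟩
    obtain ⟨⟨m, hm⟩, hlt⟩ := Nat.sInf_mem hne
    rw [← hm]
    refine hf.monotone ?_
    by_contra hmn
    push_neg at hmn
    have := hlt m hmn
    rw [ih m hmn, ← hm] at this
    exact lt_irrefl _ this

theorem exists_tilde_avoiding (x : ℕ → Set ℕ)
    (hdisj : ∀ m n, m ≠ n → Disjoint (x m) (x n))
    (hinf : ∀ n, (x n).Infinite)
    (y : Set ℕ) (hy : ∀ n, (x n ∩ y).Finite)
    (W : Set ℕ) (hW : W.Infinite) :
    ∃ z : Set ℕ, z ⊆ W ∧ z.Infinite ∧ tilde x z ∩ y = ∅ := by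
  classical
  have key : ∀ a : ℕ, ∃ c, c ∈ W ∧ a < c ∧ Nat.nth (· ∈ x a) c ∉ y := by
    intro a
    have hbad : {c : ℕ | Nat.nth (· ∈ x a) c ∈ y}.Finite := by
      have hsub : {c : ℕ | Nat.nth (· ∈ x a) c ∈ y} ⊆
          Nat.nth (· ∈ x a) ⁻¹' (x a ∩ y) := by
        intro c hc
        exact ⟨Nat.nth_mem_of_infinite (hinf a) c, hc⟩
      exact ((hy a).preimage (Nat.nth_injective (hinf a)).injOn).subset hsub
    have : (W \ {c : ℕ | Nat.nth (· ∈ x a) c ∈ y}).Infinite := hW.diff hbad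
    obtain ⟨c, hc, hac⟩ := this.exists_gt a
    exact ⟨c, hc.1, hac, hc.2⟩
  let f : ℕ → ℕ := fun n => Nat.rec (Nat.nth (· ∈ W) 0) (fun _ prev => (key prev).choose) n
  have hfs : ∀ n, f (n + 1) = (key (f n)).choose := fun n => rfl
  have hmemW : ∀ n, f n ∈ W := by
    intro n
    cases n with
    | zero => exact Nat.nth_mem_of_infinite hW 0
    | succ n => rw [hfs]; exact (key (f n)).choose_spec.1
  have hlt : ∀ n, f n < f (n + 1) := by
    intro n; rw [hfs]; exact (key (f n)).choose_spec.2.1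
  have havoid : ∀ n, Nat.nth (· ∈ x (f n)) (f (n + 1)) ∉ y := by
    intro n; rw [hfs]; exact (key (f n)).choose_spec.2.2
  have hmono : StrictMono f := strictMono_nat_of_lt_succ hlt
  refine ⟨Set.range f, Set.range_subset_iff.2 hmemW,
    Set.infinite_range_of_injective hmono.injective, ?_⟩
  ext m
  simp only [Set.mem_inter_iff, Set.mem_empty_iff_false, iff_false, not_and]
  rintro ⟨n, rfl⟩ hmy
  have henum : ∀ k, enum (Set.range f) k = f k := nth_range_of_strictMono f hmono
  rw [henum, henum] at hmy
  exact havoid n hmy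
end

section
/- Let g : [ℕ]^∞ → Y be a function into a topological space Y that is E₀-invariant (g(z) = g(z') whenever z △ z' is finite) and continuous on [W]^∞ for some infinite W ⊆ ℕ, where [W]^∞ carries the topology induced by identifying each infinite z ⊆ W with its increasing enumeration ẑ ∈ ℕ^ℕ. If Y is Hausdorff, then g is constant on [W]^∞. -/
/-- The standard topology on `[W]^∞`, induced by the increasing enumeration map
into Baire space. -/
noncomputable def stdTop (W : Set ℕ) :
    TopologicalSpace {z : Set ℕ // z ⊆ W ∧ z.Infinite} :=
  TopologicalSpace.induced (fun z => enum z.val) inferInstance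

/-!
Fix `z, z' ∈ [W]^∞` and let `u k` agree with `z` up to its `k`-th element and with `z'`
beyond it. Each `u k` is a finite modification of `z'`, so `g (u k) = g z'`, while the first `k`
elements of `u k` are those of `z`, so `u k → z` in the standard topology. Continuity and
uniqueness of limits in the Hausdorff space `Y` give `g z = g z'`.
-/

open Filter Topology Set

open Classical in
lemma enum_eq_of_forall_le_mem_iff {A B : Set ℕ} (hA : A.Infinite) {N : ℕ}
    (hAB : ∀ m ≤ N, m ∈ A ↔ m ∈ B) {n : ℕ} (hn : enum A n ≤ N) :
    enum A n = enum B n := by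
  have hmemB : enum A n ∈ B := (hAB _ hn).1 (Nat.nth_mem_of_infinite hA n)
  have hAB' : ∀ m < enum A n, m ∈ A ↔ m ∈ B := fun m hm => hAB m (by omega)
  have hcount : Nat.count (· ∈ B) (enum A n) = Nat.count (· ∈ A) (enum A n) :=
    le_antisymm (Nat.count_mono_left fun m hm => (hAB' m hm).2)
      (Nat.count_mono_left fun m hm => (hAB' m hm).1)
  calc enum A n = Nat.nth (· ∈ B) (Nat.count (· ∈ B) (enum A n)) := (Nat.nth_count hmemB).symm
    _ = enum B n := by rw [hcount, enum, Nat.count_nth_of_infinite (p := (· ∈ A)) hA]; rfl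

def splice (z z' : Set ℕ) (N : ℕ) : Set ℕ := (z ∩ Iic N) ∪ (z' ∩ Ioi N)

lemma splice_subset {z z' W : Set ℕ} (hz : z ⊆ W) (hz' : z' ⊆ W) (N : ℕ) :
    splice z z' N ⊆ W :=
  union_subset (inter_subset_left.trans hz) (inter_subset_left.trans hz')

lemma splice_infinite (z : Set ℕ) {z' : Set ℕ} (hz' : z'.Infinite) (N : ℕ) :
    (splice z z' N).Infinite := by
  refine (hz'.sdiff (finite_Iic N)).mono fun x hx => Or.inr ⟨hx.1, ?_⟩
  simpa using hx.2

lemma symmDiff_splice_finite (z z' : Set ℕ) (N : ℕ) : (symmDiff (splice z z' N) z').Finite := by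
  refine (finite_Iic N).subset fun x hx => ?_
  by_contra hxN
  simp only [mem_Iic, not_le] at hxN
  have : x ∈ splice z z' N ↔ x ∈ z' := by simp [splice, hxN, hxN.not_ge]
  rcases mem_symmDiff.1 hx with ⟨h, h'⟩ | ⟨h, h'⟩
  exacts [h' (this.1 h), h' (this.2 h)]

lemma enum_splice {z : Set ℕ} (hz : z.Infinite) (z' : Set ℕ) {n k : ℕ} (hnk : n ≤ k) :
    enum (splice z z' (enum z k)) n = enum z n := by
  refine (enum_eq_of_forall_le_mem_iff hz (N := enum z k) (fun m hm => ?_)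
    (Nat.nth_monotone hz hnk)).symm
  simp [splice, hm, hm.not_gt]

lemma tendsto_stdTop_of_eventually_enum_eq {W : Set ℕ} {ι : Type*} {l : Filter ι}
    {u : ι → {z : Set ℕ // z ⊆ W ∧ z.Infinite}} {z : {z : Set ℕ // z ⊆ W ∧ z.Infinite}}
    (h : ∀ n, ∀ᶠ i in l, enum (u i).val n = enum z.val n) :
    Tendsto u l (@nhds _ (stdTop W) z) := by
  rw [stdTop, nhds_induced, tendsto_comap_iff, tendsto_pi_nhds]
  exact fun n => tendsto_const_nhds.congr' (EventuallyEq.symm (h n))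

theorem E0_invariant_continuous_constant_general (Y : Type*) [TopologicalSpace Y] [T2Space Y]
    (g : Set ℕ → Y)
    (hinv : ∀ z z' : Set ℕ, z.Infinite → z'.Infinite → (symmDiff z z').Finite → g z = g z')
    (W : Set ℕ)
    (hcont : @Continuous _ _ (stdTop W) _
      (fun z : {z : Set ℕ // z ⊆ W ∧ z.Infinite} => g z.val)) :
    ∀ z z' : {z : Set ℕ // z ⊆ W ∧ z.Infinite}, g z.val = g z'.val := by
  let _ := stdTop W
  rintro ⟨z, hzW, hz⟩ ⟨z', hz'W, hz'⟩
  let u : ℕ → {z : Set ℕ // z ⊆ W ∧ z.Infinite} := fun k =>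
    ⟨splice z z' (enum z k), splice_subset hzW hz'W _, splice_infinite z hz' _⟩
  have hu : Tendsto u atTop (𝓝 ⟨z, hzW, hz⟩) :=
    tendsto_stdTop_of_eventually_enum_eq fun n =>
      (eventually_ge_atTop n).mono fun k hk => enum_splice hz z' hk
  have hgu : ∀ k, g (u k).val = g z' := fun k =>
    hinv _ _ (u k).2.2 hz' (symmDiff_splice_finite z z' _)
  have hlim_z : Tendsto (fun k => g (u k).val) atTop (𝓝 (g z)) := (hcont.tendsto _).comp hu
  have hlim_z' : Tendsto (fun k => g (u k).val) atTop (𝓝 (g z')) :=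
    tendsto_const_nhds.congr fun k => (hgu k).symm
  exact tendsto_nhds_unique hlim_z hlim_z'

theorem E0_invariant_continuous_constant (Y : Type*) [TopologicalSpace Y] [T2Space Y]
    (g : Set ℕ → Y)
    (hinv : ∀ z z' : Set ℕ, z.Infinite → z'.Infinite → (symmDiff z z').Finite → g z = g z')
    (W : Set ℕ) (hW : W.Infinite)
    (hcont : @Continuous _ _ (stdTop W) _
      (fun z : {z : Set ℕ // z ⊆ W ∧ z.Infinite} => g z.val)) :
    ∀ z z' : {z : Set ℕ // z ⊆ W ∧ z.Infinite}, g z.val = g z'.val :=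
  E0_invariant_continuous_constant_general Y g hinv W hcont
end
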